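/- arXiv:1305.0345 — 5 statements merged into one kernel-verified Lean document; each statement's English description precedes it below -/
import Mathlib

section
/- Let α := exp(2πi/5) and define Z : ℂ⁴ → ℂ by Z(r,d,s,t) := (α−1)·r + (1/6)·(−3α³+9α−16)·d + (α³+2α²+3α−1)·s − 5t, and T : ℂ⁴ → ℂ⁴ by T(r,d,s,t) := (r−χ, d+r, s+d+r/2, t+s+d/2+r/6) where χ := 5r + (20/3)d + 5s + 5t. Then for every v ∈ ℂ⁴ one has Z(T(v)) = α·Z(v); that is, Z is a left eigenvector of T with eigenvalue α = exp(2πi/5). -/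
open Complex

theorem exp_two_pi_I_div_five_cyclotomic :
    let α : ℂ := exp (2 * Real.pi * I / 5)
    α ^ 4 + α ^ 3 + α ^ 2 + α + 1 = 0 := by
  have hα : IsPrimitiveRoot (exp (2 * Real.pi * I / 5)) 5 := by
    simpa using isPrimitiveRoot_exp 5 (by norm_num)
  simpa [Finset.sum_range_succ, add_comm, add_left_comm, add_assoc] using
    hα.geom_sum_eq_zero (by norm_num)

theorem gepner_charge_transform_eq_mul_of_cyclotomic_five {K : Type*} [Field K] [CharZero K]
    {α : K} (hα : α ^ 4 + α ^ 3 + α ^ 2 + α + 1 = 0) (r d s t : K) :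
    (α - 1) * (r - (5 * r + (20 / 3) * d + 5 * s + 5 * t))
        + (1 / 6) * (-3 * α ^ 3 + 9 * α - 16) * (d + r)
        + (α ^ 3 + 2 * α ^ 2 + 3 * α - 1) * (s + d + r / 2) - 5 * (t + s + d / 2 + r / 6)
      = α * ((α - 1) * r + (1 / 6) * (-3 * α ^ 3 + 9 * α - 16) * d
        + (α ^ 3 + 2 * α ^ 2 + 3 * α - 1) * s - 5 * t) := by
  linear_combination (d / 2 - s) * hα

/-- `Z` is a left eigenvector of `T` with eigenvalue `α = exp(2πi/5)`. -/
theorem gepner_central_charge_eigenvector :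
    let α : ℂ := Complex.exp (2 * Real.pi * Complex.I / 5)
    let Z : ℂ → ℂ → ℂ → ℂ → ℂ := fun r d s t =>
      (α - 1) * r + (1 / 6) * (-3 * α ^ 3 + 9 * α - 16) * d
        + (α ^ 3 + 2 * α ^ 2 + 3 * α - 1) * s - 5 * t
    ∀ r d s t : ℂ,
      Z (r - (5 * r + (20 / 3) * d + 5 * s + 5 * t)) (d + r) (s + d + r / 2)
          (t + s + d / 2 + r / 6)
        = α * Z r d s t := by
  intro α Z
  exact gepner_charge_transform_eq_mul_of_cyclotomic_five exp_two_pi_I_div_five_cyclotomic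
end

section
/- Define T : ℂ⁴ → ℂ⁴ by T(r,d,s,t) := (r−χ, d+r, s+d+r/2, t+s+d/2+r/6), where χ := 5r + (20/3)d + 5s + 5t. Then the characteristic polynomial of T is the 5th cyclotomic polynomial X⁴ + X³ + X² + X + 1; in particular the eigenvalues of T are exactly the primitive 5th roots of unity exp(2πik/5), k = 1, 2, 3, 4, each with multiplicity one. -/
/-!
Cofactor expansion gives the characteristic polynomial `X⁴ + X³ + X² + X + 1 = Φ₅`. The roots of
`Φₙ` over `ℂ` are the primitive `n`-th roots of unity, i.e. the powers `ζᵏ` of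
`ζ = exp (2πi / n)` with `k < n` coprime to `n`, each occurring once since `Φₙ` is separable.
-/

open Polynomial

theorem IsPrimitiveRoot.roots_cyclotomic_eq_map_pow {R : Type*} [CommRing R] [IsDomain R]
    {ζ : R} {n : ℕ} [NeZero n] (hζ : IsPrimitiveRoot ζ n) :
    (cyclotomic n R).roots = ((Multiset.range n).filter (·.Coprime n)).map (ζ ^ ·) := by
  have := hζ.neZero'
  refine Multiset.Nodup.ext roots_cyclotomic_nodup ?_ |>.2 fun x ↦ ?_
  · refine (Multiset.nodup_range n).filter _ |>.map_on fun i hi j hj ↦ hζ.pow_inj ?_ ?_ <;>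
      simp_all
  · rw [mem_roots (cyclotomic_ne_zero n R), isRoot_cyclotomic_iff, hζ.isPrimitiveRoot_iff]
    simp [and_assoc]

theorem Complex.roots_cyclotomic_eq_map_exp {n : ℕ} (hn : n ≠ 0) :
    (cyclotomic n ℂ).roots = ((Multiset.range n).filter (·.Coprime n)).map
      fun k : ℕ ↦ exp (2 * Real.pi * I * k / n) := by
  have : NeZero n := ⟨hn⟩
  rw [(isPrimitiveRoot_exp n hn).roots_cyclotomic_eq_map_pow]
  refine Multiset.map_congr rfl fun k _ ↦ ?_
  rw [← exp_nat_mul]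
  ring_nf

theorem Polynomial.cyclotomic_five (R : Type*) [CommRing R] :
    cyclotomic 5 R = X ^ 4 + X ^ 3 + X ^ 2 + X + 1 := by
  have : Fact (Nat.Prime 5) := ⟨by norm_num⟩
  simp only [cyclotomic_prime, Finset.sum_range_succ, Finset.sum_range_zero]
  ring

/-- the characteristic polynomial of the matrix of `T` is
`X⁴ + X³ + X² + X + 1`, the 5th cyclotomic polynomial; in particular the
eigenvalues of `T` are exactly the primitive 5th roots of unity
`exp(2πik/5)`, `k = 1, 2, 3, 4`, each with multiplicity one. -/
theorem charpoly_eq_cyclotomic_five :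
    let M : Matrix (Fin 4) (Fin 4) ℂ :=
      !![-4, -20 / 3, -5, -5;
         1, 1, 0, 0;
         1 / 2, 1, 1, 0;
         1 / 6, 1 / 2, 1, 1]
    M.charpoly = X ^ 4 + X ^ 3 + X ^ 2 + X + 1 ∧
    M.charpoly = Polynomial.cyclotomic 5 ℂ ∧
    M.charpoly.roots =
      {Complex.exp (2 * Real.pi * Complex.I * 1 / 5),
       Complex.exp (2 * Real.pi * Complex.I * 2 / 5),
       Complex.exp (2 * Real.pi * Complex.I * 3 / 5),
       Complex.exp (2 * Real.pi * Complex.I * 4 / 5)} := by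
  intro M
  have hM : M.charpoly = X ^ 4 + X ^ 3 + X ^ 2 + X + 1 := by
    refine Polynomial.funext fun t ↦ ?_
    rw [Matrix.eval_charpoly, Matrix.det_succ_row_zero, Fin.sum_univ_four]
    simp [Matrix.det_fin_three, Fin.succAbove, M]
    ring
  have hΦ : M.charpoly = cyclotomic 5 ℂ := hM.trans (cyclotomic_five ℂ).symm
  refine ⟨hM, hΦ, ?_⟩
  rw [hΦ, Complex.roots_cyclotomic_eq_map_exp (by norm_num),
    show (Multiset.range 5).filter (·.Coprime 5) = {1, 2, 3, 4} by decide]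
  simp
end

section
/- Let α := exp(2πi/5), let T : ℂ⁴ → ℂ⁴ be defined by T(r,d,s,t) := (r−χ, d+r, s+d+r/2, t+s+d/2+r/6) with χ := 5r + (20/3)d + 5s + 5t, and let Z : ℂ⁴ → ℂ be Z(r,d,s,t) := (α−1)·r + (1/6)·(−3α³+9α−16)·d + (α³+2α²+3α−1)·s − 5t. If W : ℂ⁴ → ℂ is any linear functional satisfying W(T(v)) = α·W(v) for all v ∈ ℂ⁴ and the normalization W(0,0,0,1) = −5, then W = Z. That is, Z is the unique α-eigenfunctional of T with ch₃-coefficient equal to −1. -/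
/-!
A functional `W` with `W ∘ T = ζ W`, `ζ ≠ 1`, is determined by `W e₄`: evaluating the
eigen-equation on `e₄`, `e₃`, `e₂`, whose images are `-5e₁ + e₄`, `-5e₁ + e₃ + e₄` and
`-20/3 e₁ + e₂ + e₃ + e₄/2`, successively pins down `W e₁`, `W e₃` and `W e₂`. Existence holds
because `Z ∘ T - α Z` is a multiple of `α⁴ + α³ + α² + α + 1`, which vanishes at a primitive
fifth root of unity.
-/

namespace GepnerPoint

variable {K : Type*} [Field K]

/-- The action of `ST_{O_X} ∘ (⊗ O_X(1))` on `(ch₀, ch₁, ch₂, ch₃)`, in units of powers of `H`. -/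
def twistAction (p : K × K × K × K) : K × K × K × K :=
  (p.1 - (5 * p.1 + (20 / 3) * p.2.1 + 5 * p.2.2.1 + 5 * p.2.2.2),
    p.2.1 + p.1,
    p.2.2.1 + p.2.1 + p.1 / 2,
    p.2.2.2 + p.2.2.1 + p.2.1 / 2 + p.1 / 6)

def coordFunctional (a b c e : K) : (K × K × K × K) →ₗ[K] K where
  toFun p := a * p.1 + b * p.2.1 + c * p.2.2.1 + e * p.2.2.2
  map_add' _ _ := by simp only [Prod.fst_add, Prod.snd_add]; ring
  map_smul' _ _ := by simp only [Prod.smul_fst, Prod.smul_snd, smul_eq_mul, RingHom.id_apply]; ring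

theorem coordFunctional_apply (a b c e r d s t : K) :
    coordFunctional a b c e (r, d, s, t) = a * r + b * d + c * s + e * t :=
  rfl

theorem eq_coordFunctional (W : (K × K × K × K) →ₗ[K] K) :
    W = coordFunctional (W (1, 0, 0, 0)) (W (0, 1, 0, 0)) (W (0, 0, 1, 0)) (W (0, 0, 0, 1)) := by
  refine LinearMap.ext fun ⟨r, d, s, t⟩ => ?_
  have hv : ((r, d, s, t) : K × K × K × K) =
      r • (1, 0, 0, 0) + d • (0, 1, 0, 0) + s • (0, 0, 1, 0) + t • (0, 0, 0, 1) := by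
    simp
  rw [hv]
  simp only [map_add, map_smul, smul_eq_mul, coordFunctional_apply]
  ring

theorem eq_zero_of_comp_twistAction_eq_mul {ζ : K} (h5 : (5 : K) ≠ 0) (hζ : ζ ≠ 1)
    {D : (K × K × K × K) →ₗ[K] K} (hD : ∀ v, D (twistAction v) = ζ * D v)
    (he₄ : D (0, 0, 0, 1) = 0) : D = 0 := by
  obtain ⟨a, b, c, e, rfl⟩ : ∃ a b c e : K, D = coordFunctional a b c e :=
    ⟨_, _, _, _, eq_coordFunctional D⟩
  replace he₄ : e = 0 := by simpa [coordFunctional_apply] using he₄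
  have eigen (r d s t : K) := hD (r, d, s, t)
  simp only [twistAction, coordFunctional_apply] at eigen
  have hζ' : 1 - ζ ≠ 0 := sub_ne_zero.mpr hζ.symm
  have ha : a = 0 := by
    have h : 5 * a = 0 := by linear_combination -eigen 0 0 0 1 + (1 - ζ) * he₄
    exact (mul_eq_zero.mp h).resolve_left h5
  have hc : c = 0 := by
    have h : (1 - ζ) * c = 0 := by linear_combination eigen 0 0 1 0 + 5 * ha - he₄
    exact (mul_eq_zero.mp h).resolve_left hζ'
  have hb : b = 0 := by
    have h : (1 - ζ) * b = 0 := by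
      linear_combination eigen 0 1 0 0 + 20 / 3 * ha - hc - 1 / 2 * he₄
    exact (mul_eq_zero.mp h).resolve_left hζ'
  subst ha hb hc he₄
  exact LinearMap.ext fun _ => by simp [coordFunctional]

theorem eq_of_comp_twistAction_eq_mul {ζ : K} (h5 : (5 : K) ≠ 0) (hζ : ζ ≠ 1)
    {W W' : (K × K × K × K) →ₗ[K] K} (hW : ∀ v, W (twistAction v) = ζ * W v)
    (hW' : ∀ v, W' (twistAction v) = ζ * W' v) (he₄ : W (0, 0, 0, 1) = W' (0, 0, 0, 1)) :
    W = W' :=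
  sub_eq_zero.mp <| eq_zero_of_comp_twistAction_eq_mul h5 hζ
    (fun v => by simp only [LinearMap.sub_apply, hW, hW', mul_sub]) (sub_eq_zero.mpr he₄)

/-- The Gepner-point central charge `Z_G^†`. -/
def gepnerCharge (α : K) : (K × K × K × K) →ₗ[K] K :=
  coordFunctional (α - 1) (1 / 6 * (-3 * α ^ 3 + 9 * α - 16)) (α ^ 3 + 2 * α ^ 2 + 3 * α - 1) (-5)

theorem gepnerCharge_comp_twistAction [CharZero K] {α : K}
    (hα : α ^ 4 + α ^ 3 + α ^ 2 + α + 1 = 0) (v : K × K × K × K) :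
    gepnerCharge α (twistAction v) = α * gepnerCharge α v := by
  obtain ⟨r, d, s, t⟩ := v
  simp only [gepnerCharge, twistAction, coordFunctional_apply]
  linear_combination (d / 2 - s) * hα

end GepnerPoint

/-- `Z` is the unique `α`-eigenfunctional of `T` with
`ch₃`-coefficient equal to `−1`, i.e. with `W(0,0,0,1) = −5`. -/
theorem gepner_central_charge_unique :
    let α : ℂ := Complex.exp (2 * Real.pi * Complex.I / 5)
    let T : ℂ × ℂ × ℂ × ℂ → ℂ × ℂ × ℂ × ℂ := fun p =>
      (p.1 - (5 * p.1 + (20 / 3) * p.2.1 + 5 * p.2.2.1 + 5 * p.2.2.2),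
        p.2.1 + p.1,
        p.2.2.1 + p.2.1 + p.1 / 2,
        p.2.2.2 + p.2.2.1 + p.2.1 / 2 + p.1 / 6)
    let Z : ℂ → ℂ → ℂ → ℂ → ℂ := fun r d s t =>
      (α - 1) * r + (1 / 6) * (-3 * α ^ 3 + 9 * α - 16) * d
        + (α ^ 3 + 2 * α ^ 2 + 3 * α - 1) * s - 5 * t
    ∀ W : (ℂ × ℂ × ℂ × ℂ) →ₗ[ℂ] ℂ,
      (∀ v : ℂ × ℂ × ℂ × ℂ, W (T v) = α * W v) →
      W (0, 0, 0, 1) = -5 →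
      ∀ r d s t : ℂ, W (r, d, s, t) = Z r d s t := by
  intro α T Z W hW hnorm r d s t
  have hprim : IsPrimitiveRoot α 5 := by
    simpa using Complex.isPrimitiveRoot_exp 5 (by norm_num)
  have hcyc : α ^ 4 + α ^ 3 + α ^ 2 + α + 1 = 0 := by
    have h := hprim.geom_sum_eq_zero (by norm_num)
    simp only [Finset.sum_range_succ, Finset.sum_range_zero, pow_zero, pow_one] at h
    linear_combination h
  have hW_eq : W = GepnerPoint.gepnerCharge α :=
    GepnerPoint.eq_of_comp_twistAction_eq_mul (by norm_num) (hprim.ne_one (by norm_num)) hW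
      (GepnerPoint.gepnerCharge_comp_twistAction hcyc)
      (by simp [hnorm, GepnerPoint.gepnerCharge, GepnerPoint.coordFunctional_apply])
  rw [hW_eq]
  simp only [GepnerPoint.gepnerCharge, GepnerPoint.coordFunctional_apply, Z]
  ring
end

section
/- Let α := exp(2πi/5), β_b := (1/5)α³ + (2/5)α² + (3/5)α + 3/10 and β_c := (3/8)α³ + (1/4)α² + (5/8)α + 5/16. Then β_b ≠ 0 and 2·β_c/β_b = (15 − 4√5)/4. In particular, writing β_b = ib and β_c = ic with b, c positive reals, the constant 2c/b appearing in the strong Bogomolov–Gieseker conjecture equals (15 − 4√5)/4 = 1.5139..., an element of ℚ(√5) ⊂ ℚ(exp(2πi/5)). -/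
/-!
Since `α = exp(2πi/5)` has `α + α⁻¹ = 2 cos(2π/5) = (√5 - 1)/2`, it satisfies
`α² + 1 = ((√5 - 1)/2) α`. Reducing modulo this quadratic turns `β_b` and `2β_c` into the
`ℚ(√5)`-linear expressions `((√5 + 5) α - √5)/10` and `((11 - √5) α + 4 - 3√5)/8`, and the
second is `(15 - 4√5)/4` times the first. The first is nonzero because `Im α = sin(2π/5) > 0`.
-/

open Complex

theorem Complex.exp_mul_I_sq_add_one (θ : ℂ) :
    exp (θ * I) ^ 2 + 1 = 2 * cos θ * exp (θ * I) := by
  rw [two_cos, add_mul, ← exp_add, neg_mul, ← exp_add, neg_add_cancel, exp_zero, sq, exp_add]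

theorem Real.cos_two_pi_div_five : Real.cos (2 * Real.pi / 5) = (√5 - 1) / 4 := by
  have hs : √5 ^ 2 = 5 := Real.sq_sqrt (by norm_num)
  rw [show 2 * Real.pi / 5 = 2 * (Real.pi / 5) by ring, Real.cos_two_mul, Real.cos_pi_div_five]
  linear_combination hs / 8

theorem Complex.exp_two_pi_I_div_five_sq_add_one :
    exp (2 * Real.pi * I / 5) ^ 2 + 1 = ((√5 : ℂ) - 1) / 2 * exp (2 * Real.pi * I / 5) := by
  have hcos : cos (2 * Real.pi / 5 : ℝ) = ((√5 : ℂ) - 1) / 4 := by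
    rw [← ofReal_cos, Real.cos_two_pi_div_five]
    push_cast
    ring
  rw [show (2 * Real.pi * I / 5 : ℂ) = (2 * Real.pi / 5 : ℝ) * I by push_cast; ring,
    exp_mul_I_sq_add_one, hcos]
  ring

theorem Complex.exp_two_pi_I_div_five_im_pos : 0 < (exp (2 * Real.pi * I / 5)).im := by
  rw [show (2 * Real.pi * I / 5 : ℂ) = (2 * Real.pi / 5 : ℝ) * I by push_cast; ring,
    exp_ofReal_mul_I_im]
  apply Real.sin_pos_of_pos_of_lt_pi <;> linarith [Real.pi_pos]

/-- `β_b ≠ 0` and `2β_c/β_b = (15 − 4√5)/4`, the constant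
in the strong Bogomolov–Gieseker conjecture. -/
theorem two_c_div_b_eq :
    let α : ℂ := Complex.exp (2 * Real.pi * Complex.I / 5)
    let βb : ℂ := (1 / 5) * α ^ 3 + (2 / 5) * α ^ 2 + (3 / 5) * α + 3 / 10
    let βc : ℂ := (3 / 8) * α ^ 3 + (1 / 4) * α ^ 2 + (5 / 8) * α + 5 / 16
    βb ≠ 0 ∧ 2 * βc / βb = (((15 - 4 * Real.sqrt 5) / 4 : ℝ) : ℂ) := by
  intro α βb βc
  have hq : α ^ 2 + 1 = ((√5 : ℂ) - 1) / 2 * α := exp_two_pi_I_div_five_sq_add_one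
  have hs : (√5 : ℂ) ^ 2 = 5 := by exact_mod_cast Real.sq_sqrt (show (0 : ℝ) ≤ 5 by norm_num)
  have hb : βb = ((√5 + 5) * α - √5) / 10 := by
    linear_combination (α / 5 + ((√5 : ℂ) + 3) / 10) * hq + α / 20 * hs
  have hc : 2 * βc = ((11 - √5) * α + 4 - 3 * √5) / 8 := by
    linear_combination (3 / 4 * α + (3 * (√5 : ℂ) + 1) / 8) * hq + 3 * α / 16 * hs
  have hbne : βb ≠ 0 := by
    intro h
    have him : (((√5 + 5) * α - √5 : ℂ)).im = 0 := by
      rw [show ((√5 + 5) * α - √5 : ℂ) = 10 * βb by rw [hb]; ring, h, mul_zero, zero_im]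
    have hpos : 0 < (((√5 + 5) * α - √5 : ℂ)).im := by
      have : (((√5 + 5) * α - √5 : ℂ)).im = (√5 + 5) * α.im := by simp
      rw [this]
      exact mul_pos (by positivity) exp_two_pi_I_div_five_im_pos
    exact hpos.ne' him
  refine ⟨hbne, ?_⟩
  rw [div_eq_iff hbne, hb, hc]
  push_cast
  linear_combination (α - 1) / 10 * hs
end

section
/- Let α := exp(2πi/5), let Z : ℂ⁴ → ℂ be Z(r,d,s,t) := (α−1)·r + (1/6)·(−3α³+9α−16)·d + (α³+2α²+3α−1)·s − 5t, and let b := Im((1/5)α³ + (2/5)α² + (3/5)α + 3/10) and c := Im((3/8)α³ + (1/4)α² + (5/8)α + 5/16). Then for all real r > 0 and all real s, t, the imaginary part of Z at the point (r, −r/2, s, t) equals 5b·s + (c − 5b/8)·r, and the following equivalence holds: Im Z(r, −r/2, s, t) < 0 if and only if (5·(r/2)² − 10·r·s)/r² > (15 − 4√5)/4. (That is, for a sheaf E on a quintic 3-fold with ch(E) = (r, −(r/2)H, sH², tH³), the strong Bogomolov–Gieseker inequality Δ(E)·H/r² > 2c/b is equivalent to the strict negativity of Im Z_G^†(E).) 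-/
/-!
With `S = sin(π/5) > 0` and `cos(π/5) = (1 + √5)/4`, the imaginary parts of `α, α², α³` are
`S(1 + √5)/2, S, -S`, so `b = S(5 + 3√5)/10 > 0` and `2c/b = (15 - 4√5)/4`.
For every `α`, `Im Z(r, -r/2, s, t) = 5bs + (c - 5b/8)r`, and `Δ·H/r² = 5/4 - 10s/r`;
so for `b, r > 0` both `Im Z < 0` and `Δ·H/r² > 2c/b` say `s/r < 1/8 - c/(5b)`.
-/

open Real

local notation "ζ₅" => Complex.exp (2 * Real.pi * Complex.I / 5)

noncomputable def gepnerB (z : ℂ) : ℝ :=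
  ((1 / 5) * z ^ 3 + (2 / 5) * z ^ 2 + (3 / 5) * z + 3 / 10).im

noncomputable def gepnerC (z : ℂ) : ℝ :=
  ((3 / 8) * z ^ 3 + (1 / 4) * z ^ 2 + (5 / 8) * z + 5 / 16).im

lemma im_central_charge (z : ℂ) (r s t : ℝ) :
    ((z - 1) * r + (1 / 6) * (-3 * z ^ 3 + 9 * z - 16) * (-(r : ℂ) / 2)
      + (z ^ 3 + 2 * z ^ 2 + 3 * z - 1) * s - 5 * t).im
      = 5 * gepnerB z * s + (gepnerC z - 5 * gepnerB z / 8) * r := by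
  simp [gepnerB, gepnerC, Complex.mul_im]
  ring

lemma neg_iff_discriminant_gt {b c r s : ℝ} (hb : 0 < b) (hr : 0 < r) :
    5 * b * s + (c - 5 * b / 8) * r < 0 ↔
      (5 * (r / 2) ^ 2 - 10 * r * s) / r ^ 2 > 2 * c / b := by
  have key : 2 * r * (5 * b * s + (c - 5 * b / 8) * r)
      = 2 * c * r ^ 2 - (5 * (r / 2) ^ 2 - 10 * r * s) * b := by ring
  rw [gt_iff_lt, lt_div_iff₀ (by positivity), div_mul_eq_mul_div, div_lt_iff₀ hb,
    ← sub_neg (a := 2 * c * r ^ 2), ← key]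
  exact (smul_neg_iff_of_pos_left (by positivity : (0 : ℝ) < 2 * r)).symm

lemma exp_ofReal_mul_I_pow_im (θ : ℝ) (n : ℕ) :
    (Complex.exp (θ * Complex.I) ^ n).im = Real.sin (n * θ) := by
  rw [← Complex.exp_nat_mul, ← mul_assoc, ← Complex.ofReal_natCast, ← Complex.ofReal_mul,
    Complex.exp_ofReal_mul_I_im]

lemma exp_two_pi_I_div_five_pow_im (n : ℕ) :
    (ζ₅ ^ n).im = Real.sin (n * (2 * π / 5)) := by
  rw [← exp_ofReal_mul_I_pow_im]
  push_cast
  ring_nf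

lemma exp_two_pi_I_div_five_im :
    (ζ₅).im = Real.sin (π / 5) * ((1 + √5) / 2) := by
  rw [← pow_one (Complex.exp _), exp_two_pi_I_div_five_pow_im, Nat.cast_one, one_mul,
    show 2 * π / 5 = 2 * (π / 5) by ring, sin_two_mul, cos_pi_div_five]
  ring

lemma exp_two_pi_I_div_five_sq_im :
    (ζ₅ ^ 2).im = Real.sin (π / 5) := by
  rw [exp_two_pi_I_div_five_pow_im, Nat.cast_ofNat,
    show 2 * (2 * π / 5) = π - π / 5 by ring, sin_pi_sub]

lemma exp_two_pi_I_div_five_cube_im :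
    (ζ₅ ^ 3).im = -Real.sin (π / 5) := by
  rw [exp_two_pi_I_div_five_pow_im, Nat.cast_ofNat,
    show 3 * (2 * π / 5) = π / 5 + π by ring, sin_add_pi]

lemma gepnerB_exp : gepnerB ζ₅ = Real.sin (π / 5) * ((5 + 3 * √5) / 10) := by
  simp [gepnerB, Complex.mul_im, exp_two_pi_I_div_five_im, exp_two_pi_I_div_five_sq_im,
    exp_two_pi_I_div_five_cube_im]
  ring

lemma gepnerC_exp : gepnerC ζ₅ = Real.sin (π / 5) * ((3 + 5 * √5) / 16) := by
  simp [gepnerC, Complex.mul_im, exp_two_pi_I_div_five_im, exp_two_pi_I_div_five_sq_im,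
    exp_two_pi_I_div_five_cube_im]
  ring

lemma gepnerB_exp_pos : 0 < gepnerB ζ₅ := by
  have hS : 0 < Real.sin (π / 5) := sin_pos_of_pos_of_lt_pi (by positivity) (by linarith [pi_pos])
  rw [gepnerB_exp]
  positivity

lemma two_mul_gepnerC_div_gepnerB : 2 * gepnerC ζ₅ / gepnerB ζ₅ = (15 - 4 * √5) / 4 := by
  have h5 : √5 ^ 2 = 5 := sq_sqrt (by norm_num)
  rw [div_eq_iff gepnerB_exp_pos.ne', gepnerB_exp, gepnerC_exp]
  linear_combination 3 / 10 * Real.sin (π / 5) * h5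

/-- for `r > 0` real and `s, t` real, the imaginary part of the
Gepner central charge at `(r, −r/2, s, t)` equals `5b·s + (c − 5b/8)·r`, and its
strict negativity is equivalent to the strong Bogomolov–Gieseker inequality
`(5(r/2)² − 10rs)/r² > (15 − 4√5)/4`. -/
theorem strong_BG_iff_negative_imaginary_part :
    let α : ℂ := Complex.exp (2 * Real.pi * Complex.I / 5)
    let Z : ℂ → ℂ → ℂ → ℂ → ℂ := fun r d s t =>
      (α - 1) * r + (1 / 6) * (-3 * α ^ 3 + 9 * α - 16) * d
        + (α ^ 3 + 2 * α ^ 2 + 3 * α - 1) * s - 5 * t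
    let b : ℝ := ((1 / 5) * α ^ 3 + (2 / 5) * α ^ 2 + (3 / 5) * α + 3 / 10).im
    let c : ℝ := ((3 / 8) * α ^ 3 + (1 / 4) * α ^ 2 + (5 / 8) * α + 5 / 16).im
    ∀ r s t : ℝ, 0 < r →
      (Z (r : ℂ) (-(r : ℂ) / 2) (s : ℂ) (t : ℂ)).im = 5 * b * s + (c - 5 * b / 8) * r ∧
      ((Z (r : ℂ) (-(r : ℂ) / 2) (s : ℂ) (t : ℂ)).im < 0 ↔
        (5 * (r / 2) ^ 2 - 10 * r * s) / r ^ 2 > (15 - 4 * Real.sqrt 5) / 4) := by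
  intro α Z b c r s t hr
  have hZ : (Z r (-r / 2) s t).im = 5 * b * s + (c - 5 * b / 8) * r := im_central_charge α r s t
  refine ⟨hZ, ?_⟩
  rw [hZ, ← two_mul_gepnerC_div_gepnerB]
  exact neg_iff_discriminant_gt gepnerB_exp_pos hr
end
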